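/- arXiv:1708.06583 — 5 statements merged into one kernel-verified Lean document; each statement's English description precedes it below -/
import Mathlib

section
/- Let G be a finite group, and define the map F from Aut_c(G) to Hom(G, Z(G)) by F(φ)(g) = φ(g)·g⁻¹ for g ∈ G (this is indeed a homomorphism from G into Z(G) for every central automorphism φ). Then G is purely non-abelian if and only if F is a bijection. Moreover, in any case, if z ∈ Hom(G, Z(G)) lies in the image of F, then the unique central automorphism φ with F(φ) = z is given by φ(g) = g·z(g). -/
/-- A finite group `G` is purely non-abelian if it has no nontrivial abelian direct
factor: whenever `G` is the internal direct product of two normal subgroups `A` and `B`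
with `A` abelian, `A` is trivial. -/
def PurelyNonAbelian (G : Type*) [Group G] : Prop :=
  ∀ A B : Subgroup G, A.Normal → B.Normal → IsCompl A B →
    (∀ a b : A, a * b = b * a) → A = ⊥

/-- The map `F : Aut_c(G) → Hom(G, Z(G))`, `F(φ)(g) = φ(g)·g⁻¹`.  This is indeed a
homomorphism from `G` into `Z(G)` for every central automorphism `φ`. -/
def Fmap {G : Type*} [Group G]
    (φ : {φ : MulAut G // ∀ g : G, φ g * g⁻¹ ∈ Subgroup.center G}) :
    {f : G →* G // ∀ x : G, f x ∈ Subgroup.center G} :=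
  ⟨{ toFun := fun g => φ.1 g * g⁻¹
     map_one' := by simp
     map_mul' := by
       intro g h
       have hc := φ.2 h
       rw [Subgroup.mem_center_iff] at hc
       show φ.1 (g * h) * (g * h)⁻¹ = (φ.1 g * g⁻¹) * (φ.1 h * h⁻¹)
       rw [map_mul, mul_inv_rev]
       calc φ.1 g * φ.1 h * (h⁻¹ * g⁻¹)
           = φ.1 g * ((φ.1 h * h⁻¹) * g⁻¹) := by group
         _ = φ.1 g * (g⁻¹ * (φ.1 h * h⁻¹)) := by rw [← hc g⁻¹]
         _ = φ.1 g * g⁻¹ * (φ.1 h * h⁻¹) := by group },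
   fun x => φ.2 x⟩


/-!
If `z : G →* Z(G)`, then `ψ g = g * z g` is an endomorphism moving every element by a central
factor, and `F` hits `z` exactly when `ψ` is bijective; `F` is injective because
`φ g = g * F φ g`. For finite `G` some power `e = ψ ^ n` is idempotent, so `G` is the internal
direct product of `ker e` and `range e`; `ker e` is central, hence abelian, and `range e` is normal
because `e` also moves elements by central factors. In a purely non-abelian group `ker e = 1`,
so `ψ` is injective, hence bijective. Conversely, an abelian direct factor `A` is central, so
`z = (projection onto A)⁻¹` lies in `Hom(G, Z(G))`, and `φ = F⁻¹ z` would kill `A`.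
-/

theorem exists_isIdempotentElem_pow {M : Type*} [Monoid M] [Finite M] (a : M) :
    ∃ n ≠ 0, IsIdempotentElem (a ^ n) := by
  let : TopologicalSpace M := ⊥
  have : DiscreteTopology M := ⟨rfl⟩
  obtain ⟨_, ⟨n, hn, rfl⟩, h⟩ := exists_idempotent_in_compact_subsemigroup
    (fun _ => continuous_of_discreteTopology)
    {x | ∃ n ≠ 0, a ^ n = x} ⟨a, 1, one_ne_zero, pow_one a⟩ (Set.toFinite _).isCompact
    (by rintro _ ⟨m, hm, rfl⟩ _ ⟨n, -, rfl⟩; exact ⟨m + n, by omega, pow_add a m n⟩)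
  exact ⟨n, hn, h⟩

namespace Subgroup

variable {G : Type*} [Group G]

theorem le_center_of_isCompl {A B : Subgroup G} (hA : A.Normal) (hB : B.Normal)
    (hAB : IsCompl A B) (hcomm : ∀ a b : A, a * b = b * a) : A ≤ center G := by
  intro a ha
  rw [mem_center_iff]
  intro g
  have hg : g ∈ ((A ⊔ B : Subgroup G) : Set G) := by simp [hAB.sup_eq_top]
  rw [mul_normal, Set.mem_mul] at hg
  obtain ⟨x, hx, y, hy, rfl⟩ := hg
  have hxa : Commute x a := congrArg Subtype.val (hcomm ⟨x, hx⟩ ⟨a, ha⟩)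
  have hya : Commute y a := (commute_of_normal_of_disjoint A B hA hB hAB.disjoint a y ha hy).symm
  exact (hxa.mul_left hya).eq

theorem exists_retraction_of_isCompl {A B : Subgroup G} [B.Normal] (hAB : IsCompl A B) :
    ∃ p : G →* A, ∀ a : A, p a = a := by
  have h : A.IsComplement' B := isComplement'_of_disjoint_and_mul_eq_univ hAB.disjoint
    (by rw [← mul_normal, hAB.sup_eq_top, coe_top])
  exact ⟨h.QuotientMulEquiv.toMonoidHom.comp (QuotientGroup.mk' B),
    h.leftQuotientEquiv.apply_symm_apply⟩

end Subgroup

namespace MonoidHom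

variable {G : Type*} [Group G]

def IsCentral (f : G →* G) : Prop :=
  ∀ g, f g * g⁻¹ ∈ Subgroup.center G

theorem isCentral_id : (MonoidHom.id G).IsCentral := by
  simp [IsCentral]

theorem IsCentral.comp {f₁ f₂ : G →* G} (hf₁ : f₁.IsCentral) (hf₂ : f₂.IsCentral) :
    (f₁.comp f₂).IsCentral := by
  intro g
  have h : f₁ (f₂ g) * g⁻¹ = (f₁ (f₂ g) * (f₂ g)⁻¹) * (f₂ g * g⁻¹) := by group
  rw [comp_apply, h]
  exact mul_mem (hf₁ _) (hf₂ g)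

theorem IsCentral.ker_le_center {f : G →* G} (hf : f.IsCentral) : f.ker ≤ Subgroup.center G := by
  intro x hx
  simpa [mem_ker.mp hx] using hf x

-- `f g` and `g` differ by a central factor, so conjugating by `f g` is conjugating by `g`.
theorem IsCentral.normal_range {f : G →* G} (hf : f.IsCentral) : f.range.Normal := by
  constructor
  rintro _ ⟨c, rfl⟩ g
  refine ⟨g * c * g⁻¹, ?_⟩
  have hconj : f g * f c * (f g)⁻¹ = g * f c * g⁻¹ :=
    calc f g * f c * (f g)⁻¹ = (f g * g⁻¹) * (g * f c * g⁻¹) * (f g * g⁻¹)⁻¹ := by group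
      _ = g * f c * g⁻¹ := by rw [← Subgroup.mem_center_iff.mp (hf g)]; group
  simp only [map_mul, map_inv, hconj]

theorem isCompl_ker_range_of_idempotent {e : G →* G} (he : ∀ x, e (e x) = e x) :
    IsCompl e.ker e.range := by
  constructor
  · rw [disjoint_iff_inf_le]
    rintro _ ⟨hx, c, rfl⟩
    have hx : e (e c) = 1 := hx
    rwa [he] at hx
  · rw [codisjoint_iff_le_sup]
    intro g _
    have hker : g * (e g)⁻¹ ∈ e.ker := by simp [he]
    simpa using Subgroup.mul_mem_sup hker (show e g ∈ e.range from ⟨g, rfl⟩)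

def idMulCentral (z : G →* G) (hz : ∀ x, z x ∈ Subgroup.center G) : G →* G where
  toFun g := g * z g
  map_one' := by simp
  map_mul' g h := by
    rw [map_mul, ← mul_assoc, mul_assoc g h, Subgroup.mem_center_iff.mp (hz g) h]
    group

theorem idMulCentral_apply (z : G →* G)
    (hz : ∀ x, z x ∈ Subgroup.center G) (g : G) : idMulCentral z hz g = g * z g :=
  rfl

theorem isCentral_idMulCentral (z : G →* G)
    (hz : ∀ x, z x ∈ Subgroup.center G) : (idMulCentral z hz).IsCentral := by
  intro g
  rw [idMulCentral_apply, mul_inv_eq_of_eq_mul (Subgroup.mem_center_iff.mp (hz g) g)]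
  exact hz g

end MonoidHom

def centralEndomorphisms (G : Type*) [Group G] : Submonoid (Monoid.End G) where
  carrier := {f | MonoidHom.IsCentral f}
  one_mem' := MonoidHom.isCentral_id
  mul_mem' := MonoidHom.IsCentral.comp

namespace PurelyNonAbelian

variable {G : Type*} [Group G]

theorem ker_eq_bot_of_isCentral (hG : PurelyNonAbelian G) {e : G →* G} (hc : e.IsCentral)
    (he : ∀ x, e (e x) = e x) : e.ker = ⊥ :=
  hG _ _ e.normal_ker hc.normal_range (MonoidHom.isCompl_ker_range_of_idempotent he)
    fun a b => Subtype.ext (Subgroup.mem_center_iff.mp (hc.ker_le_center b.2) a)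

theorem injective_of_isCentral [Finite G] (hG : PurelyNonAbelian G) {f : G →* G}
    (hf : f.IsCentral) : Function.Injective f := by
  have : Finite (Monoid.End G) := Finite.of_injective _ DFunLike.coe_injective
  let f' : Monoid.End G := f
  obtain ⟨n, hn, he⟩ := exists_isIdempotentElem_pow f'
  have hker : MonoidHom.ker (f' ^ n) = ⊥ :=
    hG.ker_eq_bot_of_isCentral (pow_mem (show f' ∈ centralEndomorphisms G from hf) n)
      (DFunLike.congr_fun he)
  obtain ⟨m, rfl⟩ := Nat.exists_eq_succ_of_ne_zero hn
  exact ((MonoidHom.ker_eq_bot_iff _).mp hker).of_comp (f := f^[m])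

end PurelyNonAbelian

section Fmap

variable {G : Type*} [Group G]

theorem apply_eq_mul_Fmap (φ : {φ : MulAut G // ∀ g : G, φ g * g⁻¹ ∈ Subgroup.center G})
    (g : G) : φ.1 g = g * (Fmap φ).1 g := by
  rw [Subgroup.mem_center_iff.mp ((Fmap φ).2 g) g]
  exact (inv_mul_cancel_right _ g).symm

theorem Fmap_injective : Function.Injective (Fmap (G := G)) := by
  intro φ₁ φ₂ h
  ext g
  rw [apply_eq_mul_Fmap φ₁, apply_eq_mul_Fmap φ₂, h]

theorem Fmap_surjective [Finite G] (hG : PurelyNonAbelian G) :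
    Function.Surjective (Fmap (G := G)) := by
  rintro ⟨z, hz⟩
  have hψ := MonoidHom.isCentral_idMulCentral z hz
  have hbij := Finite.injective_iff_bijective.mp (hG.injective_of_isCentral hψ)
  refine ⟨⟨MulEquiv.ofBijective _ hbij, hψ⟩, Subtype.ext (MonoidHom.ext fun g => ?_)⟩
  show g * z g * g⁻¹ = z g
  rw [mul_inv_eq_of_eq_mul (Subgroup.mem_center_iff.mp (hz g) g)]

open scoped IsMulCommutative in
theorem purelyNonAbelian_of_surjective_Fmap (hF : Function.Surjective (Fmap (G := G))) :
    PurelyNonAbelian G := by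
  intro A B hA hB hAB hcomm
  have hAc := Subgroup.le_center_of_isCompl hA hB hAB hcomm
  obtain ⟨p, hp⟩ := Subgroup.exists_retraction_of_isCompl hAB
  have : IsMulCommutative A := isMulCommutative_iff.mpr hcomm
  let z : G →* G := A.subtype.comp (invMonoidHom.comp p)
  obtain ⟨φ, hφ⟩ := hF ⟨z, fun x => hAc (p x)⁻¹.2⟩
  rw [Subgroup.eq_bot_iff_forall]
  intro a ha
  apply φ.1.injective
  rw [apply_eq_mul_Fmap, hφ, map_one]
  change a * ((p a)⁻¹ : A) = 1
  rw [hp ⟨a, ha⟩, InvMemClass.coe_inv, mul_inv_cancel]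

end Fmap

/-- Adney–Yen: `G` is purely non-abelian iff `F` is a bijection; moreover in any case,
if `z` is in the image of `F` then the unique central automorphism `φ` with `F φ = z`
is given by `φ(g) = g·z(g)`. -/
theorem purelyNonAbelian_iff_bijective_Fmap (G : Type*) [Group G] [Finite G] :
    (PurelyNonAbelian G ↔ Function.Bijective (Fmap (G := G))) ∧
    (∀ z : {f : G →* G // ∀ x : G, f x ∈ Subgroup.center G},
      z ∈ Set.range (Fmap (G := G)) →
      ∀ φ : {φ : MulAut G // ∀ g : G, φ g * g⁻¹ ∈ Subgroup.center G},
        Fmap φ = z → ∀ g : G, φ.1 g = g * z.1 g) := by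
  refine ⟨⟨fun hG => ⟨Fmap_injective, Fmap_surjective hG⟩,
    fun hF => purelyNonAbelian_of_surjective_Fmap hF.2⟩, ?_⟩
  rintro z - φ rfl g
  exact apply_eq_mul_Fmap φ g
end

section
/- Let G be a finite group. Then the following are equivalent: (1) G is purely non-abelian; (2) there exists N ∈ ℕ such that for every sequence f₁, f₂, f₃, … of elements of Hom(G, Z(G)), the iterated compositions g_k = f_k ∘ f_{k-1} ∘ … ∘ f₁ (defined inductively by g₁ = f₁ and g_{m+1} = f_{m+1} ∘ g_m) satisfy that g_k is the trivial homomorphism for all k ≥ N. -/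
open scoped Pointwise


/-- The iterated composition of a sequence of endomorphisms:
`iterComp f k = f k ∘ f (k-1) ∘ ⋯ ∘ f 0` (a composition of `k + 1` of the maps). -/
def iterComp {G : Type*} [Group G] (f : ℕ → (G →* G)) : ℕ → (G →* G)
  | 0 => f 0
  | (k + 1) => (f (k + 1)).comp (iterComp f k)

section Aux

variable {G : Type*} [Group G]

lemma iterComp_mem_center (f : ℕ → (G →* G))
    (h : ∀ n x, f n x ∈ Subgroup.center G) :
    ∀ k x, iterComp f k x ∈ Subgroup.center G
  | 0, x => h 0 x
  | (k + 1), x => h (k + 1) _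

lemma iterComp_shift (f : ℕ → (G →* G)) (i d : ℕ) :
    iterComp f (i + 1 + d) = (iterComp (fun n => f (i + 1 + n)) d).comp (iterComp f i) := by
  induction d with
  | zero => rfl
  | succ d ih =>
      show (f (i + 1 + d + 1)).comp (iterComp f (i + 1 + d)) = _
      rw [ih]
      rfl

lemma iterComp_trivial_of_trivial (f : ℕ → (G →* G)) (i : ℕ)
    (h : ∀ x, iterComp f i x = 1) : ∀ k, i ≤ k → ∀ x, iterComp f k x = 1 := by
  intro k hk
  induction k with
  | zero =>
      have : i = 0 := Nat.le_zero.mp hk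
      subst this; exact h
  | succ k ih =>
      rcases Nat.lt_or_ge i (k + 1) with hlt | hge
      · intro x
        have hk' : i ≤ k := Nat.lt_succ_iff.mp hlt
        show (f (k + 1)) (iterComp f k x) = 1
        rw [ih hk' x, map_one]
      · have : i = k + 1 := le_antisymm hk hge
        subst this; exact h

/-- Under pure non-abelianness, every endomorphism with central image is nilpotent. -/
lemma pow_trivial_of_central [Finite G] (hG : PurelyNonAbelian G)
    (q : G →* G) (hq : ∀ x, q x ∈ Subgroup.center G) :
    ∃ n : ℕ, 1 ≤ n ∧ ∀ x, ((show Monoid.End G from q) ^ n) x = 1 := by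
  classical
  set Q : Monoid.End G := q with hQdef
  -- pigeonhole: powers of Q repeat
  have hfin : Finite (Monoid.End G) :=
    Finite.of_injective (fun f => (f : G → G)) DFunLike.coe_injective
  obtain ⟨a, b, hab, heq⟩ := Finite.exists_ne_map_eq_of_infinite (fun n : ℕ => Q ^ n)
  wlog hlt : a < b generalizing a b
  · exact this b a hab.symm heq.symm (by omega)
  set p : ℕ := b - a with hp
  have hp1 : 1 ≤ p := by omega
  have hper : Q ^ (a + p) = Q ^ a := by
    have : a + p = b := by omega
    rw [this]; exact heq.symm
  -- all exponents ≥ a are periodic with period p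
  have hstep : ∀ m, a ≤ m → Q ^ (m + p) = Q ^ m := by
    intro m hm
    have h1 : m + p = (m - a) + (a + p) := by omega
    have h2 : m = (m - a) + a := by omega
    rw [h1, pow_add, hper, ← pow_add, ← h2]
  have hmany : ∀ t m, a ≤ m → Q ^ (m + t * p) = Q ^ m := by
    intro t
    induction t with
    | zero => intro m _; simp
    | succ t ih =>
        intro m hm
        have : m + (t + 1) * p = (m + p) + t * p := by ring
        rw [this, ih (m + p) (by omega), hstep m hm]
  set n : ℕ := p * (a + 1) with hn
  have haux : a + 1 ≤ p * (a + 1) := Nat.le_mul_of_pos_left _ (by omega)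
  have hna : a ≤ n := by omega
  have hn1 : 1 ≤ n := by omega
  set e : Monoid.End G := Q ^ n with he
  have hee : e * e = e := by
    rw [he, ← pow_add]
    have : n + n = n + (a + 1) * p := by rw [hn]; ring
    rw [this]
    exact hmany (a + 1) n hna
  have heapply : ∀ x, e (e x) = e x := fun x => DFunLike.congr_fun hee x
  have hecentral : ∀ x, e x ∈ Subgroup.center G := by
    intro x
    have hdecomp : e = Q * Q ^ (n - 1) := by
      rw [he, ← pow_succ']
      congr 1
      omega
    rw [hdecomp]
    exact hq _
  -- build the direct factor
  set A : Subgroup G := MonoidHom.range (e : G →* G) with hA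
  set B : Subgroup G := MonoidHom.ker (e : G →* G) with hB
  have hAcen : A ≤ Subgroup.center G := by
    rintro x ⟨y, rfl⟩
    exact hecentral y
  have hAnormal : A.Normal := by
    constructor
    intro x hx g
    have hc := (Subgroup.mem_center_iff.mp (hAcen hx)) g
    have : g * x * g⁻¹ = x := by
      rw [hc]; group
    rwa [this]
  have hBnormal : B.Normal := MonoidHom.normal_ker _
  have hdisj : Disjoint A B := by
    rw [Subgroup.disjoint_def]
    rintro x ⟨y, rfl⟩ hxB
    have h1 : e (e y) = 1 := hxB
    rw [heapply y] at h1
    exact h1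
  have hcodisj : Codisjoint A B := by
    rw [codisjoint_iff, eq_top_iff]
    intro x _
    have hx1 : (e x : G) ∈ A := ⟨x, rfl⟩
    have hx2 : (e x)⁻¹ * x ∈ B := by
      show e ((e x)⁻¹ * x) = 1
      rw [map_mul, map_inv, heapply x, inv_mul_cancel]
    have := Subgroup.mul_mem_sup hx1 hx2
    rwa [mul_inv_cancel_left] at this
  have hcomm : ∀ u v : A, u * v = v * u := by
    intro u v
    apply Subtype.ext
    exact (Subgroup.mem_center_iff.mp (hAcen u.2) v.1).symm
  have hbot : A = ⊥ := hG A B hAnormal hBnormal ⟨hdisj, hcodisj⟩ hcomm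
  refine ⟨n, hn1, fun x => ?_⟩
  have : e x ∈ A := ⟨x, rfl⟩
  rw [hbot] at this
  exact this

end Aux

/-- `G` is purely non-abelian iff there is an `N` such that for every sequence of
homomorphisms `G → Z(G)`, all iterated compositions of length at least `N` are trivial. -/
theorem purelyNonAbelian_iff_iterComp_eventually_trivial (G : Type*) [Group G] [Finite G] :
    PurelyNonAbelian G ↔
      ∃ N : ℕ, ∀ f : ℕ → {f : G →* G // ∀ x : G, f x ∈ Subgroup.center G},
        ∀ k : ℕ, N ≤ k → ∀ x : G, iterComp (fun n => (f n).1) k x = 1 := by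
  classical
  constructor
  · intro hG
    have : Fintype G := Fintype.ofFinite G
    refine ⟨Fintype.card (G → G), ?_⟩
    intro f k hk
    set F : ℕ → (G →* G) := fun n => (f n).1 with hF
    have hFc : ∀ n x, F n x ∈ Subgroup.center G := fun n x => (f n).2 x
    -- pigeonhole among g_0, ..., g_C
    obtain ⟨i, j, hij, heq⟩ :=
      Fintype.exists_ne_map_eq_of_card_lt
        (fun m : Fin (Fintype.card (G → G) + 1) => ((iterComp F m : G →* G) : G → G))
        (by simp)
    wlog hlt : (i : ℕ) < (j : ℕ) generalizing i j
    · refine this j i hij.symm heq.symm ?_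
      have hne : (i : ℕ) ≠ (j : ℕ) := fun h => hij (Fin.ext h)
      omega
    have heq' : ∀ x, iterComp F i x = iterComp F j x := fun x => congrFun heq x
    set d : ℕ := (j : ℕ) - (i : ℕ) - 1 with hd
    have hj : (j : ℕ) = (i : ℕ) + 1 + d := by omega
    set Q : G →* G := iterComp (fun n => F ((i : ℕ) + 1 + n)) d with hQ
    have hsplit : iterComp F (j : ℕ) = Q.comp (iterComp F (i : ℕ)) := by
      rw [hj]; exact iterComp_shift F i d
    have hfix : ∀ x, Q (iterComp F (i : ℕ) x) = iterComp F (i : ℕ) x := by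
      intro x
      have := heq' x
      rw [hsplit] at this
      exact this.symm
    have hQc : ∀ x, Q x ∈ Subgroup.center G :=
      iterComp_mem_center _ (fun n x => hFc _ x) d
    obtain ⟨n, hn1, hQn⟩ := pow_trivial_of_central hG Q hQc
    have hpowfix : ∀ m x, ((show Monoid.End G from Q) ^ m) (iterComp F (i : ℕ) x) =
        iterComp F (i : ℕ) x := by
      intro m
      induction m with
      | zero => intro x; rfl
      | succ m ih =>
          intro x
          rw [pow_succ']
          show Q (((show Monoid.End G from Q) ^ m) (iterComp F (i : ℕ) x)) = _
          rw [ih x, hfix x]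
    have hitriv : ∀ x, iterComp F (i : ℕ) x = 1 := by
      intro x
      have := hpowfix n x
      rw [hQn _] at this
      exact this.symm
    intro x
    exact iterComp_trivial_of_trivial F (i : ℕ) hitriv k
      (le_trans (le_trans (Nat.le_of_lt_succ i.2) hk) le_rfl) x
  · rintro ⟨N, hN⟩ A B hAn hBn hcompl hab
    -- decomposition of every element
    have hdecomp : ∀ x : G, ∃ a ∈ A, ∃ b ∈ B, x = a * b := by
      intro x
      have hx : x ∈ A ⊔ B := by rw [hcompl.sup_eq_top]; trivial
      have hx' : x ∈ ((A : Set G) * (B : Set G)) := by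
        rw [← Subgroup.mul_normal A B]
        exact hx
      obtain ⟨a, ha, b, hb, hab'⟩ := hx'
      exact ⟨a, ha, b, hb, hab'.symm⟩
    choose pa hpa pb hpb hxab using hdecomp
    -- commuting of A with B
    have hABcomm : ∀ a ∈ A, ∀ b ∈ B, Commute a b := fun a ha b hb =>
      Subgroup.commute_of_normal_of_disjoint A B hAn hBn hcompl.disjoint a b ha hb
    -- A is central
    have hAcen : A ≤ Subgroup.center G := by
      intro a ha
      rw [Subgroup.mem_center_iff]
      intro g
      have hg := hxab g
      have h1 : Commute a (pb g) := hABcomm a ha (pb g) (hpb g)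
      have h2 : a * pa g = pa g * a :=
        (congrArg Subtype.val (hab ⟨pa g, hpa g⟩ ⟨a, ha⟩)).symm
      calc g * a = pa g * pb g * a := by rw [← hg]
        _ = pa g * (a * pb g) := by rw [mul_assoc, ← h1.eq]
        _ = (pa g * a) * pb g := by rw [mul_assoc]
        _ = (a * pa g) * pb g := by rw [← h2]
        _ = a * g := by rw [mul_assoc, ← hg]
    -- uniqueness of the decomposition
    have huniq : ∀ x a b, a ∈ A → b ∈ B → x = a * b → pa x = a := by
      intro x a b ha hb hx
      have hxx : a * b = pa x * pb x := by rw [← hx]; exact hxab x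
      have h1 : a⁻¹ * pa x = b * (pb x)⁻¹ := by
        rw [inv_mul_eq_iff_eq_mul, ← mul_assoc, hxx, mul_assoc, mul_inv_cancel, mul_one]
      have hmem : a⁻¹ * pa x ∈ A := A.mul_mem (A.inv_mem ha) (hpa x)
      have hmem' : a⁻¹ * pa x ∈ B := by rw [h1]; exact B.mul_mem hb (B.inv_mem (hpb x))
      have hone' : a⁻¹ * pa x = 1 := by
        have := hcompl.disjoint.le_bot (Subgroup.mem_inf.mpr ⟨hmem, hmem'⟩ : _)
        simpa using this
      exact (inv_mul_eq_one.mp hone').symm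
    -- the projection is a homomorphism
    have hmul : ∀ x y : G, pa (x * y) = pa x * pa y := by
      intro x y
      apply huniq (x * y) (pa x * pa y) (pb x * pb y)
        (A.mul_mem (hpa x) (hpa y)) (B.mul_mem (hpb x) (hpb y))
      have hc : Commute (pb x) (pa y) := (hABcomm (pa y) (hpa y) (pb x) (hpb x)).symm
      calc x * y = pa x * pb x * (pa y * pb y) := by rw [← hxab x, ← hxab y]
        _ = pa x * (pb x * pa y) * pb y := by group
        _ = pa x * (pa y * pb x) * pb y := by rw [hc.eq]
        _ = pa x * pa y * (pb x * pb y) := by group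
    have hone : pa 1 = 1 := huniq 1 1 1 A.one_mem B.one_mem (by group)
    set π : G →* G := { toFun := pa, map_one' := hone, map_mul' := hmul } with hπ
    have hπc : ∀ x, π x ∈ Subgroup.center G := fun x => hAcen (hpa x)
    have hidem : ∀ x, π (π x) = π x := by
      intro x
      exact huniq (pa x) (pa x) 1 (hpa x) B.one_mem (by group)
    have hconst : ∀ k x, iterComp (fun _ => π) k x = π x := by
      intro k
      induction k with
      | zero => intro x; rfl
      | succ k ih =>
          intro x
          show π (iterComp (fun _ => π) k x) = π x
          rw [ih x, hidem]
    have htriv := hN (fun _ => ⟨π, hπc⟩) N le_rfl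
    -- conclude A = ⊥
    ext x
    simp only [Subgroup.mem_bot]
    constructor
    · intro hx
      have h1 : pa x = x := huniq x x 1 hx B.one_mem (by group)
      have h2 : iterComp (fun _ => π) N x = 1 := htriv x
      rw [hconst N x] at h2
      rw [← h1]
      exact h2
    · rintro rfl; exact A.one_mem
end

section
/- Let G be a finite group. Then G is purely non-abelian if and only if every composition f_k ∘ f_{k-1} ∘ … ∘ f₁ of k ≥ |Hom(G, Z(G))| elements f₁, …, f_k of Hom(G, Z(G)) is the trivial homomorphism. (Here Hom(G, Z(G)) is a finite set since G is finite.) -/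
section Aux
variable {G : Type*} [Group G]

lemma iterComp_center (f : ℕ → (G →* G)) (hf : ∀ n x, f n x ∈ Subgroup.center G) :
    ∀ k x, iterComp f k x ∈ Subgroup.center G
  | 0, x => hf 0 x
  | (k+1), _ => hf (k+1) _

lemma iterComp_one_mono (f : ℕ → (G →* G)) (i d : ℕ)
    (h : ∀ x, iterComp f i x = 1) : ∀ x, iterComp f (i + d) x = 1 := by
  induction d with
  | zero => exact h
  | succ d ih =>
    intro x
    show (f (i+d+1)) (iterComp f (i+d) x) = 1
    rw [ih x, map_one]

lemma iterComp_split (f : ℕ → (G →* G)) (i d : ℕ) :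
    ∀ x, iterComp f (i + 1 + d) x
      = iterComp (fun n => f (i + 1 + n)) d (iterComp f i x) := by
  induction d with
  | zero => intro x; rfl
  | succ d ih =>
    intro x
    show f (i+1+d+1) (iterComp f (i+1+d) x)
      = f (i+1+(d+1)) (iterComp (fun n => f (i + 1 + n)) d (iterComp f i x))
    rw [ih x]
    rfl

lemma idem_eq_one (hG : PurelyNonAbelian G) (e : G →* G)
    (hc : ∀ x, e x ∈ Subgroup.center G) (hid : ∀ x, e (e x) = e x) :
    ∀ x, e x = 1 := by
  have hAc : ∀ a b : e.range, a * b = b * a := by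
    rintro ⟨a, x, rfl⟩ ⟨b, hb⟩
    have := Subgroup.mem_center_iff.mp (hc x) b
    exact Subtype.ext (by push_cast; exact this.symm)
  have hAn : e.range.Normal := by
    constructor
    rintro a ⟨x, rfl⟩ g
    have h1 : g * e x = e x * g := Subgroup.mem_center_iff.mp (hc x) g
    rw [h1, mul_assoc, mul_inv_cancel, mul_one]
    exact ⟨x, rfl⟩
  have hcompl : IsCompl e.range e.ker := by
    constructor
    · rw [disjoint_iff_inf_le]
      rintro a ⟨⟨x, rfl⟩, hk⟩
      have : e (e x) = 1 := hk
      rw [hid x] at this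
      simpa using this
    · rw [codisjoint_iff_le_sup]
      intro x _
      have h1 : e x ∈ e.range := ⟨x, rfl⟩
      have h2 : (e x)⁻¹ * x ∈ e.ker := by
        rw [MonoidHom.mem_ker, map_mul, map_inv, hid x, inv_mul_cancel]
      have := Subgroup.mul_mem_sup h1 h2
      rwa [mul_inv_cancel_left] at this
  have hbot := hG e.range e.ker hAn e.normal_ker hcompl hAc
  intro x
  have : e x ∈ e.range := ⟨x, rfl⟩
  rw [hbot] at this
  simpa using this

lemma fixed_eq_one [Finite G] (hG : PurelyNonAbelian G) (H : G →* G)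
    (hc : ∀ x, H x ∈ Subgroup.center G) {y : G} (hy : H y = y) : y = 1 := by
  obtain ⟨a, b, hne, hab⟩ := Finite.exists_ne_map_eq_of_infinite
    (fun n : ℕ => (⇑H)^[n])
  wlog hlt : a < b generalizing a b
  · exact this b a hne.symm hab.symm (by omega)
  set p := b - a with hp
  have hp1 : 1 ≤ p := by omega
  have key : ∀ n, (⇑H)^[a + p + n] = (⇑H)^[a + n] := by
    intro n
    have hb : a + p = b := by omega
    rw [Function.iterate_add, hb, ← hab, ← Function.iterate_add]
  set m := (a + 1) * p with hm
  have hma : a ≤ m := by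
    have : (a + 1) * 1 ≤ (a + 1) * p := Nat.mul_le_mul_left _ hp1
    omega
  have hm1 : 1 ≤ m := Nat.mul_pos (by omega) hp1
  have hstep : ∀ n, (⇑H)^[m + p + n] = (⇑H)^[m + n] := by
    intro n
    have h1 : m + p + n = a + p + (m - a + n) := by omega
    have h2 : m + n = a + (m - a + n) := by omega
    rw [h1, h2, key]
  have hidem : ∀ t, (⇑H)^[m + t * p] = (⇑H)^[m] := by
    intro t
    induction t with
    | zero => simp
    | succ t ih =>
      have h3 : m + (t + 1) * p = m + p + t * p := by ring
      rw [h3, hstep, ih]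
  have h2m : (⇑H)^[m + m] = (⇑H)^[m] := by
    have := hidem (a + 1)
    rwa [← hm] at this
  obtain ⟨m', hm'⟩ : ∃ m', m = m' + 1 := ⟨m - 1, by omega⟩
  rw [hm'] at h2m
  set e : G →* G := iterComp (fun _ => H) m' with he
  have hev : ∀ x, e x = (⇑H)^[m' + 1] x := by
    intro x
    rw [he]
    clear he hm' h2m
    induction m' with
    | zero => rfl
    | succ n ih =>
      show H (iterComp (fun _ => H) n x) = (⇑H)^[n + 1 + 1] x
      rw [ih, Function.iterate_succ_apply', Function.iterate_succ_apply',
        Function.iterate_succ_apply']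
  have hec : ∀ x, e x ∈ Subgroup.center G :=
    iterComp_center (fun _ => H) (fun _ => hc) m'
  have heid : ∀ x, e (e x) = e x := by
    intro x
    simp only [hev]
    rw [← Function.iterate_add_apply]
    exact congrFun h2m x
  have hiter : ∀ n, (⇑H)^[n] y = y := by
    intro n
    induction n with
    | zero => rfl
    | succ n ih => rw [Function.iterate_succ_apply', ih, hy]
  have hfix : e y = y := by rw [hev]; exact hiter _
  have := idem_eq_one hG e hec heid y
  rw [hfix] at this
  exact this

end Aux

/-- `G` is purely non-abelian iff every composition of at least `|Hom(G, Z(G))|` elements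
of `Hom(G, Z(G))` is the trivial homomorphism. -/
theorem purelyNonAbelian_iff_long_compositions_trivial (G : Type*) [Group G] [Finite G] :
    PurelyNonAbelian G ↔
      ∀ (f : ℕ → {f : G →* G // ∀ x : G, f x ∈ Subgroup.center G}) (k : ℕ),
        Nat.card {f : G →* G // ∀ x : G, f x ∈ Subgroup.center G} ≤ k + 1 →
        ∀ x : G, iterComp (fun n => (f n).1) k x = 1 := by
  constructor
  · intro hG f k hk
    have hTfin : Finite {f : G →* G // ∀ x : G, f x ∈ Subgroup.center G} := by
      have : Finite (G →* G) := Finite.of_injective (fun f => ⇑f) DFunLike.coe_injective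
      infer_instance
    set g : ℕ → (G →* G) := fun n => (f n).1 with hg
    have hgc : ∀ n x, g n x ∈ Subgroup.center G := fun n => (f n).2
    set F : Fin (k + 2) → {f : G →* G // ∀ x : G, f x ∈ Subgroup.center G} := fun i =>
      if h : (i : ℕ) ≤ k then ⟨iterComp g i, iterComp_center g hgc i⟩
      else ⟨1, fun x => by simpa using Subgroup.one_mem _⟩ with hF
    have hninj : ¬ Function.Injective F := by
      intro hinj
      have := Nat.card_le_card_of_injective F hinj
      simp only [Nat.card_eq_fintype_card, Fintype.card_fin] at this
      omega
    rw [Function.not_injective_iff] at hninj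
    obtain ⟨i, j, hFij, hij⟩ := hninj
    -- reduce to: ∃ i ≤ k, iterComp g i trivial
    suffices h : ∃ i : ℕ, i ≤ k ∧ ∀ x, iterComp g i x = 1 by
      obtain ⟨i, hik, hi⟩ := h
      intro x
      have := iterComp_one_mono g i (k - i) hi x
      rwa [Nat.add_sub_cancel' hik] at this
    wlog hlt : (i : ℕ) < (j : ℕ) generalizing i j
    · have hne : (i : ℕ) ≠ (j : ℕ) := Fin.val_ne_of_ne hij
      exact this j i hFij.symm hij.symm (by omega)
    by_cases hjk : (j : ℕ) ≤ k
    · -- repeat case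
      have hik : (i : ℕ) ≤ k := by omega
      have hgij : iterComp g (i : ℕ) = iterComp g (j : ℕ) := by
        have := congrArg Subtype.val hFij
        simpa [hF, hik, hjk] using this
      obtain ⟨d, hd⟩ : ∃ d, (j : ℕ) = (i : ℕ) + 1 + d := ⟨(j : ℕ) - (i : ℕ) - 1, by omega⟩
      set H : G →* G := iterComp (fun n => g ((i : ℕ) + 1 + n)) d with hH
      have hHc : ∀ x, H x ∈ Subgroup.center G :=
        iterComp_center _ (fun n => hgc _) d
      refine ⟨(i : ℕ), hik, fun x => ?_⟩
      have hfixed : H (iterComp g (i : ℕ) x) = iterComp g (i : ℕ) x := by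
        conv_rhs => rw [hgij, hd]
        exact (iterComp_split g (i : ℕ) d x).symm
      exact fixed_eq_one hG H hHc hfixed
    · -- F j is the trivial hom
      have hik : (i : ℕ) ≤ k := by
        have := i.isLt
        have := j.isLt
        omega
      have : iterComp g (i : ℕ) = (1 : G →* G) := by
        have := congrArg Subtype.val hFij
        simpa [hF, hik, hjk] using this
      exact ⟨(i : ℕ), hik, fun x => by rw [this]; rfl⟩
  · intro h A B hAn hBn hcompl hAc
    haveI := hBn
    have hcomm : ∀ a ∈ A, ∀ b ∈ B, a * b = b * a := by
      intro a ha b hb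
      exact Subgroup.commute_of_normal_of_disjoint A B hAn hBn hcompl.disjoint a b ha hb
    have hAcomm : ∀ a ∈ A, ∀ a' ∈ A, a * a' = a' * a := by
      intro a ha a' ha'
      exact congrArg Subtype.val (hAc ⟨a, ha⟩ ⟨a', ha'⟩)
    have hdecomp : ∀ x : G, ∃ a ∈ A, ∃ b ∈ B, x = a * b := by
      intro x
      have hx : x ∈ ((A ⊔ B : Subgroup G) : Set G) := by
        rw [hcompl.sup_eq_top]; trivial
      rw [Subgroup.mul_normal A B] at hx
      obtain ⟨a, ha, b, hb, hab⟩ := hx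
      exact ⟨a, ha, b, hb, hab.symm⟩
    have huniq : ∀ a ∈ A, ∀ b ∈ B, ∀ a' ∈ A, ∀ b' ∈ B, a * b = a' * b' → a = a' := by
      intro a ha b hb a' ha' b' hb' hE
      have h1 : a'⁻¹ * a = b' * b⁻¹ := by
        calc a'⁻¹ * a = a'⁻¹ * (a * b) * b⁻¹ := by group
          _ = a'⁻¹ * (a' * b') * b⁻¹ := by rw [hE]
          _ = b' * b⁻¹ := by group
      have hm1 : a'⁻¹ * a ∈ A := mul_mem (inv_mem ha') ha
      have hm2 : a'⁻¹ * a ∈ B := h1 ▸ mul_mem hb' (inv_mem hb)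
      have := Subgroup.disjoint_def.mp hcompl.disjoint hm1 hm2
      have h2 : a' * (a'⁻¹ * a) = a' * 1 := by rw [this]
      rwa [mul_inv_cancel_left, mul_one] at h2
    choose pa hpaA pb hpbB hpx using hdecomp
    have hfixA : ∀ a ∈ A, pa a = a := fun a ha =>
      huniq (pa a) (hpaA a) (pb a) (hpbB a) a ha 1 (one_mem B)
        (by rw [← hpx a, mul_one])
    set p : G →* G :=
      { toFun := pa
        map_one' := huniq (pa 1) (hpaA 1) (pb 1) (hpbB 1) 1 (one_mem A) 1 (one_mem B)
          (by rw [← hpx 1, mul_one])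
        map_mul' := by
          intro x y
          refine huniq (pa (x * y)) (hpaA (x * y)) (pb (x * y)) (hpbB (x * y))
            (pa x * pa y) (mul_mem (hpaA x) (hpaA y))
            (pb x * pb y) (mul_mem (hpbB x) (hpbB y)) ?_
          have hswap : pb x * pa y = pa y * pb x :=
            (hcomm (pa y) (hpaA y) (pb x) (hpbB x)).symm
          calc pa (x * y) * pb (x * y) = x * y := (hpx (x * y)).symm
            _ = (pa x * pb x) * (pa y * pb y) := by rw [← hpx x, ← hpx y]
            _ = pa x * (pb x * pa y) * pb y := by group
            _ = pa x * (pa y * pb x) * pb y := by rw [hswap]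
            _ = pa x * pa y * (pb x * pb y) := by group } with hpdef
    have hcent : ∀ x : G, p x ∈ Subgroup.center G := by
      intro x
      rw [Subgroup.mem_center_iff]
      intro g
      have ha : pa x ∈ A := hpaA x
      calc g * p x = (pa g * pb g) * pa x := by rw [← hpx g]; rfl
        _ = pa g * (pa x * pb g) := by
            rw [mul_assoc, (hcomm (pa x) ha (pb g) (hpbB g)).symm]
        _ = (pa g * pa x) * pb g := by rw [mul_assoc]
        _ = (pa x * pa g) * pb g := by rw [hAcomm _ (hpaA g) _ ha]
        _ = pa x * (pa g * pb g) := by rw [mul_assoc]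
        _ = p x * g := by rw [← hpx g]; rfl
    have hpp : ∀ x : G, p (p x) = p x := fun x => hfixA (pa x) (hpaA x)
    have hconst : ∀ k x, iterComp (fun _ => p) k x = p x := by
      intro k
      induction k with
      | zero => intro x; rfl
      | succ k ih =>
        intro x
        show p (iterComp (fun _ => p) k x) = p x
        rw [ih x, hpp x]
    have hone : ∀ x : G, p x = 1 := by
      intro x
      have := h (fun _ => ⟨p, hcent⟩)
        (Nat.card {f : G →* G // ∀ x : G, f x ∈ Subgroup.center G}) (Nat.le_succ _) x
      rwa [hconst] at this
    rw [eq_bot_iff]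
    intro a ha
    have : pa a = 1 := hone a
    rw [hfixA a ha] at this
    simpa using this
end

section
/- A finite group G is purely non-abelian if and only if every homomorphism f ∈ Hom(G, Z(G)) is nilpotent, i.e. for every homomorphism f: G → G with image contained in Z(G) there exists n ≥ 1 such that the n-fold composite fⁿ is the trivial homomorphism. -/
/-- In a finite type, some iterate of `f` (with positive exponent) is idempotent. -/
lemma exists_idempotent_iterate {G : Type*} [Finite G] (f : G → G) :
    ∃ N : ℕ, 1 ≤ N ∧ f^[N] ∘ f^[N] = f^[N] := by
  obtain ⟨m, n, hmn, h⟩ := Finite.exists_ne_map_eq_of_infinite (fun n : ℕ => f^[n])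
  wlog hlt : m < n generalizing m n
  · exact this n m hmn.symm h.symm (by omega)
  set d := n - m with hd
  have hd1 : 1 ≤ d := by omega
  have step : ∀ j, m ≤ j → f^[j + d] = f^[j] := by
    intro j hj
    have h1 : j + d = (j - m) + n := by omega
    have h2 : j = (j - m) + m := by omega
    rw [h1, Function.iterate_add, ← h, ← Function.iterate_add, ← h2]
  have mult : ∀ k j, m ≤ j → f^[j + k * d] = f^[j] := by
    intro k
    induction k with
    | zero => simp
    | succ k ih =>
      intro j hj
      have : j + (k + 1) * d = (j + d) + k * d := by ring
      rw [this, ih (j + d) (by omega), step j hj]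
  refine ⟨(m + 1) * d, Nat.one_le_iff_ne_zero.mpr (Nat.mul_ne_zero (by omega) (by omega)), ?_⟩
  rw [← Function.iterate_add]
  exact mult (m + 1) ((m + 1) * d) (by nlinarith)

/-- A finite group `G` is purely non-abelian iff every homomorphism `f : G → G` with
image contained in the center is nilpotent: some `n`-fold composite (`n ≥ 1`) is trivial. -/
theorem purelyNonAbelian_iff_central_homs_nilpotent (G : Type*) [Group G] [Finite G] :
    PurelyNonAbelian G ↔
      ∀ f : G →* G, (∀ x : G, f x ∈ Subgroup.center G) →
        ∃ n : ℕ, 1 ≤ n ∧ ∀ x : G, (⇑f)^[n] x = 1 := by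
  constructor
  · -- purely non-abelian → every central hom is nilpotent
    intro hPNA f hf
    obtain ⟨N, hN1, hNe⟩ := exists_idempotent_iterate (⇑f)
    -- the iterate as a monoid hom
    set E : G →* G :=
      { toFun := (⇑f)^[N]
        map_one' := iterate_map_one f N
        map_mul' := fun x y => iterate_map_mul f N x y } with hE
    have hEE : ∀ x, E (E x) = E x := fun x => congrFun hNe x
    have hEcen : ∀ x, E x ∈ Subgroup.center G := by
      intro x
      have : E x = f ((⇑f)^[N - 1] x) := by
        show (⇑f)^[N] x = _
        conv_lhs => rw [show N = (N - 1) + 1 by omega]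
        rw [Function.iterate_succ']
        rfl
      rw [this]; exact hf _
    set A := E.range with hA
    set B := E.ker with hB
    have hmemcen : ∀ x ∈ A, x ∈ Subgroup.center G := by
      rintro x ⟨y, rfl⟩; exact hEcen y
    have hAnormal : A.Normal := by
      constructor
      intro a ha g
      have := (Subgroup.mem_center_iff.mp (hmemcen a ha)) g
      rw [this, mul_inv_cancel_right]
      exact ha
    have hBnormal : B.Normal := E.normal_ker
    have hdisj : Disjoint A B := by
      rw [disjoint_iff]
      ext x
      simp only [Subgroup.mem_inf, Subgroup.mem_bot]
      constructor
      · rintro ⟨⟨y, rfl⟩, hxB⟩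
        have : E (E y) = 1 := hxB
        rw [hEE] at this
        exact this
      · rintro rfl; exact ⟨Subgroup.one_mem _, Subgroup.one_mem _⟩
    have hcodis : Codisjoint A B := by
      rw [codisjoint_iff, eq_top_iff]
      intro g _
      have h1 : E g ∈ A := ⟨g, rfl⟩
      have h2 : (E g)⁻¹ * g ∈ B := by
        show E ((E g)⁻¹ * g) = 1
        rw [map_mul, map_inv, hEE, inv_mul_cancel]
      have := Subgroup.mul_mem_sup h1 h2
      rwa [mul_inv_cancel_left] at this
    have hcomm : ∀ a b : A, a * b = b * a := by
      intro a b
      ext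
      push_cast
      exact (Subgroup.mem_center_iff.mp (hmemcen a.1 a.2) b.1).symm
    have hAbot := hPNA A B hAnormal hBnormal ⟨hdisj, hcodis⟩ hcomm
    refine ⟨N, hN1, fun x => ?_⟩
    have : E x ∈ A := ⟨x, rfl⟩
    rw [hAbot, Subgroup.mem_bot] at this
    exact this
  · -- every central hom nilpotent → purely non-abelian
    intro h A B hAn hBn hcompl hAcomm
    -- A is central
    have hAcen : ∀ a ∈ A, a ∈ Subgroup.center G := by
      intro a ha
      rw [Subgroup.mem_center_iff]
      intro g
      have hg : g ∈ (↑(A ⊔ B) : Set G) := by rw [hcompl.sup_eq_top]; trivial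
      rw [Subgroup.mul_normal A B] at hg
      obtain ⟨x, hx, y, hy, rfl⟩ := hg
      have hax : a * x = x * a := by
        have := hAcomm ⟨a, ha⟩ ⟨x, hx⟩
        exact congrArg Subtype.val this
      have hay : Commute a y :=
        Subgroup.commute_of_normal_of_disjoint A B hAn hBn hcompl.disjoint a y ha hy
      calc x * y * a = x * (a * y) := by rw [mul_assoc, ← hay.eq]
        _ = a * (x * y) := by rw [← mul_assoc, ← hax, mul_assoc]
    -- the projection onto A, via G ⧸ B ≃* A
    set π : G →* G ⧸ B := QuotientGroup.mk' B with hπ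
    set ψ : A →* G ⧸ B := π.comp A.subtype with hψ
    have hψinj : Function.Injective ψ := by
      rw [← MonoidHom.ker_eq_bot_iff, eq_bot_iff]
      rintro ⟨a, ha⟩ hk
      have : a ∈ B := (QuotientGroup.eq_one_iff a).mp hk
      have : a ∈ A ⊓ B := ⟨ha, this⟩
      rw [hcompl.inf_eq_bot] at this
      simpa [Subgroup.mem_bot, Subtype.ext_iff] using this
    have hψsurj : Function.Surjective ψ := by
      intro q
      obtain ⟨g, rfl⟩ := QuotientGroup.mk'_surjective B q
      have hg : g ∈ (↑(A ⊔ B) : Set G) := by rw [hcompl.sup_eq_top]; trivial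
      rw [Subgroup.mul_normal A B] at hg
      obtain ⟨x, hx, y, hy, rfl⟩ := hg
      refine ⟨⟨x, hx⟩, ?_⟩
      show π x = π (x * y)
      rw [map_mul]
      have : π y = 1 := (QuotientGroup.eq_one_iff y).mpr hy
      rw [this, mul_one]
    set e : A ≃* G ⧸ B := MulEquiv.ofBijective ψ ⟨hψinj, hψsurj⟩ with he
    set F : G →* G := A.subtype.comp (e.symm.toMonoidHom.comp π) with hF
    have hFcen : ∀ x : G, F x ∈ Subgroup.center G := fun x => hAcen _ (e.symm (π x)).2
    have hFfix : ∀ a ∈ A, F a = a := by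
      intro a ha
      have : π a = ψ ⟨a, ha⟩ := rfl
      show ((e.symm (π a) : A) : G) = a
      rw [this]
      have : e.symm (ψ ⟨a, ha⟩) = ⟨a, ha⟩ := e.symm_apply_apply ⟨a, ha⟩
      rw [show ψ ⟨a, ha⟩ = e ⟨a, ha⟩ from rfl, e.symm_apply_apply]
    obtain ⟨n, hn1, hn⟩ := h F hFcen
    rw [eq_bot_iff]
    intro a ha
    have hiter : ∀ k, (⇑F)^[k] a = a := by
      intro k
      induction k with
      | zero => rfl
      | succ k ih => rw [Function.iterate_succ, Function.comp_apply, hFfix a ha, ih]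
    have := hn a
    rw [hiter n] at this
    simp [this]
end

section
/- Let G be a finite purely non-abelian group and let f, g ∈ Hom(G, Z(G)) satisfy f ∘ g = g (as maps from G to G). Then g is the trivial homomorphism. -/
open Function

theorem exists_pos_isIdempotentElem_pow {M : Type*} [Monoid M] [Finite M] (a : M) :
    ∃ n, 0 < n ∧ IsIdempotentElem (a ^ n) := by
  obtain ⟨i, j, hij, hpow⟩ := Finite.exists_ne_map_eq_of_infinite (a ^ · : ℕ → M)
  wlog hlt : i < j generalizing i j
  · exact this j i hij.symm hpow.symm (by omega)
  have hper : IsPeriodicPt (a * ·) (j - i) (a ^ i) := by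
    simpa [IsPeriodicPt, IsFixedPt, ← pow_add, Nat.sub_add_cancel hlt.le] using hpow.symm
  have hin : i < (j - i) * (i + 1) := Nat.lt_of_lt_of_le i.lt_succ_self
    (Nat.le_mul_of_pos_left _ (Nat.sub_pos_of_lt hlt))
  -- Any multiple of the period `j - i` that is at least `i` works.
  refine ⟨(j - i) * (i + 1), by omega, ?_⟩
  have hn : a ^ ((j - i) * (i + 1)) = (a * ·)^[(j - i) * (i + 1) - i] (a ^ i) := by
    simp [← pow_add, Nat.sub_add_cancel hin.le]
  have := (hper.mul_const (i + 1)).apply_iterate ((j - i) * (i + 1) - i)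
  rw [← hn] at this
  simpa [IsIdempotentElem, IsPeriodicPt, IsFixedPt, ← pow_add] using this

namespace Subgroup

variable {G : Type*} [Group G] {H : Subgroup G}

theorem normal_of_le_center (hH : H ≤ center G) : H.Normal where
  conj_mem a ha g := by rwa [(mem_center_iff.mp (hH ha) g), mul_inv_cancel_right]

theorem mul_comm_of_le_center (hH : H ≤ center G) (a b : H) : a * b = b * a :=
  Subtype.ext (mem_center_iff.mp (hH b.2) a)

end Subgroup

theorem MonoidHom.isCompl_range_ker_of_comp_self {G : Type*} [Group G] {e : G →* G}
    (he : e.comp e = e) : IsCompl e.range e.ker := by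
  have hee (x : G) : e (e x) = e x := DFunLike.congr_fun he x
  constructor
  · rw [disjoint_iff, eq_bot_iff]
    rintro _ ⟨⟨y, rfl⟩, hy : e (e y) = 1⟩
    rwa [hee] at hy
  · rw [codisjoint_iff, eq_top_iff]
    intro x _
    rw [← mul_inv_cancel_left (e x) x]
    exact Subgroup.mul_mem_sup ⟨x, rfl⟩ (by simp [hee])

theorem PurelyNonAbelian.eq_one_of_comp_self {G : Type*} [Group G] (hG : PurelyNonAbelian G)
    {e : G →* G} (he : e.comp e = e) (hc : ∀ x, e x ∈ Subgroup.center G) (x : G) : e x = 1 := by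
  have hle : e.range ≤ Subgroup.center G := by rintro _ ⟨y, rfl⟩; exact hc y
  have := hG _ _ (Subgroup.normal_of_le_center hle) e.normal_ker
    (MonoidHom.isCompl_range_ker_of_comp_self he) (Subgroup.mul_comm_of_le_center hle)
  simpa [this] using e.mem_range.mpr ⟨x, rfl⟩

theorem trivial_of_comp_fixed_general (G : Type*) [Group G] [Finite G]
    (hG : PurelyNonAbelian G) (f g : G →* G)
    (hf : ∀ x : G, f x ∈ Subgroup.center G)
    (h : ∀ x : G, f (g x) = g x) :
    ∀ x : G, g x = 1 := by
  have : Finite (Monoid.End G) := DFunLike.finite _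
  let F : Monoid.End G := f
  obtain ⟨n, hn, hidem⟩ := exists_pos_isIdempotentElem_pow F
  have hcenter (x : G) : (F ^ n) x ∈ Subgroup.center G := by
    obtain ⟨m, rfl⟩ := Nat.exists_eq_succ_of_ne_zero hn.ne'
    rw [Monoid.End.coe_pow, iterate_succ_apply']
    exact hf _
  have hfix (x : G) : (F ^ n) (g x) = g x := by
    rw [Monoid.End.coe_pow]
    exact iterate_fixed (h x) n
  intro x
  rw [← hfix x]
  exact hG.eq_one_of_comp_self hidem hcenter (g x)

/-- If `G` is a finite purely non-abelian group and `f, g ∈ Hom(G, Z(G))` satisfy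
`f ∘ g = g`, then `g` is the trivial homomorphism. -/
theorem trivial_of_comp_fixed (G : Type*) [Group G] [Finite G]
    (hG : PurelyNonAbelian G) (f g : G →* G)
    (hf : ∀ x : G, f x ∈ Subgroup.center G)
    (hg : ∀ x : G, g x ∈ Subgroup.center G)
    (h : ∀ x : G, f (g x) = g x) :
    ∀ x : G, g x = 1 :=
  trivial_of_comp_fixed_general G hG f g hf h
end
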